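/- Let p : X̃ → X and q : Ỹ → Y be universal covering maps, f : X → Y continuous, x₀ ∈ X, x̃₀ ∈ p⁻¹(x₀), f̃₀ a fixed lifting of f, and f_* : D(X) → D(Y) the induced homomorphism of deck transformation groups. If a loop a at f(x₀) represents an element of the generalized Gottlieb group G^f(Y, f(x₀)), and h is the unique deck transformation of q sending f̃₀(x̃₀) to the endpoint of the lift of a starting at f̃₀(x̃₀), then h commutes with f_*(l) for every deck transformation l of p, and there exists a homotopy H̃ : X̃ × [0,1] → Ỹ with H̃₀ = f̃₀ and H̃₁ = h ∘ f̃₀. -/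

import Mathlib

/-!
Lift the homotopy `(x̃, t) ↦ H (p x̃, t)` through `q`, starting at `f̃₀`. Its trace at `x̃₀` is the
lift of `a`, so at time `1` the lift agrees with `h ∘ f̃₀` at `x̃₀`, hence everywhere, since both
lift `f ∘ p` and `X̃` is connected. Homotopy lifting is equivariant: the lift intertwines `l` with
`f_*(l)` at all times because it does at time `0`. Evaluating at `(x̃₀, 1)` then shows that the
deck transformations `h ∘ f_*(l)` and `f_*(l) ∘ h` agree at `f̃₀(x̃₀)`, so they are equal.
-/

open unitInterval

/-- A deck transformation of `q : E → B` is a self-homeomorphism `h` of `E` with `q ∘ h = q`. -/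
def IsDeck {E B : Type*} [TopologicalSpace E] [TopologicalSpace B]
    (q : E → B) (h : E ≃ₜ E) : Prop :=
  ∀ e, q (h e) = q e

/-- `ft` is a lifting of `f : X → Y` with respect to the covering maps `p, q`. -/
def IsLift {XT X YT Y : Type*} [TopologicalSpace XT] [TopologicalSpace X]
    [TopologicalSpace YT] [TopologicalSpace Y]
    (p : XT → X) (q : YT → Y) (f : X → Y) (ft : XT → YT) : Prop :=
  Continuous ft ∧ ∀ x, q (ft x) = f (p x)

/-- A homotopy `H : XT × I → YT` is fibre-preserving with respect to `p` and `q`, i.e.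
fibre-preserving as a map with respect to `p × id : XT × I → X × I` and `q`. -/
def IsFPHomotopy {XT X YT Y : Type*} [TopologicalSpace XT] [TopologicalSpace X]
    [TopologicalSpace YT] [TopologicalSpace Y]
    (p : XT → X) (q : YT → Y) (H : XT × I → YT) : Prop :=
  ∀ z z' : XT × I, p z.1 = p z'.1 → z.2 = z'.2 → q (H z) = q (H z')

namespace IsDeck

variable {E B : Type*} [TopologicalSpace E] [TopologicalSpace B] {q : E → B}

theorem trans {g h : E ≃ₜ E} (hg : IsDeck q g) (hh : IsDeck q h) : IsDeck q (g.trans h) :=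
  fun e => (hh (g e)).trans (hg e)

theorem ext_of_apply_eq [PreconnectedSpace E] (hq : IsCoveringMap q) {g h : E ≃ₜ E}
    (hg : IsDeck q g) (hh : IsDeck q h) {e : E} (he : g e = h e) : g = h := by
  refine Homeomorph.ext (congrFun (hq.eq_of_comp_eq g.continuous h.continuous ?_ e he))
  funext e'
  exact (hg e').trans (hh e').symm

theorem commute_of_apply_eq [PreconnectedSpace E] (hq : IsCoveringMap q) {g h : E ≃ₜ E}
    (hg : IsDeck q g) (hh : IsDeck q h) {e : E} (he : h (g e) = g (h e)) (y : E) :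
    h (g y) = g (h y) :=
  DFunLike.congr_fun (ext_of_apply_eq hq (hg.trans hh) (hh.trans hg) he) y

end IsDeck

namespace IsCoveringMap

variable {E B A : Type*} [TopologicalSpace E] [TopologicalSpace B] [TopologicalSpace A]
  {q : E → B} (hq : IsCoveringMap q) {G : C(I × A, B)} {f : C(A, E)} (hG₀ : ∀ a, G (0, a) = q (f a))
include hq

theorem liftHomotopy_apply_eq_of_lifts {a₀ : A} {γ : C(I, E)} (hγ : ∀ t, q (γ t) = G (t, a₀))
    (hγ₀ : γ 0 = f a₀) (t : I) : hq.liftHomotopy G f hG₀ (t, a₀) = γ t := by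
  refine congrFun (hq.eq_of_comp_eq (g₁ := fun t => hq.liftHomotopy G f hG₀ (t, a₀))
    (by fun_prop) γ.continuous ?_ 0 ?_) t
  · funext t
    exact (congrFun (hq.liftHomotopy_lifts G f hG₀) (t, a₀)).trans (hγ t).symm
  · exact (hq.liftHomotopy_zero G f hG₀ a₀).trans hγ₀.symm

theorem liftHomotopy_apply_homeomorph {l : A ≃ₜ A} {g : E ≃ₜ E} (hg : IsDeck q g)
    (hGl : ∀ t a, G (t, l a) = G (t, a)) (hfl : ∀ a, f (l a) = g (f a)) (t : I) (a : A) :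
    hq.liftHomotopy G f hG₀ (t, l a) = g (hq.liftHomotopy G f hG₀ (t, a)) := by
  set L := hq.liftHomotopy G f hG₀
  have hgG₀ : ∀ a, G (0, a) = q (g (f a)) := fun a => (hG₀ a).trans (hg (f a)).symm
  have hL_comp_l : L.comp (.prodMap (.id I) l) = hq.liftHomotopy G ((g : C(E, E)).comp f) hgG₀ :=
    (hq.eq_liftHomotopy_iff' hgG₀ _).2 ⟨by
      funext ⟨t, a⟩
      exact (congrFun (hq.liftHomotopy_lifts G f hG₀) (t, l a)).trans (hGl t a),
      fun a => (hq.liftHomotopy_zero G f hG₀ (l a)).trans (hfl a)⟩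
  have hg_comp_L : (g : C(E, E)).comp L = hq.liftHomotopy G ((g : C(E, E)).comp f) hgG₀ :=
    (hq.eq_liftHomotopy_iff' hgG₀ _).2 ⟨by
      funext w
      exact (hg (L w)).trans (congrFun (hq.liftHomotopy_lifts G f hG₀) w),
      fun a => congrArg g (hq.liftHomotopy_zero G f hG₀ a)⟩
  exact DFunLike.congr_fun (hL_comp_l.trans hg_comp_L.symm) (t, a)

end IsCoveringMap

theorem stmt_11_general {X Y XT YT : Type*} [TopologicalSpace X] [TopologicalSpace Y]
    [TopologicalSpace XT] [TopologicalSpace YT]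
    [SimplyConnectedSpace XT] [SimplyConnectedSpace YT]
    (p : XT → X) (q : YT → Y) (hp : IsCoveringMap p) (hq : IsCoveringMap q)
    (f : X → Y)
    (x₀ : X) (xt₀ : XT) (hxt₀ : p xt₀ = x₀)
    (f0 : XT → YT) (hf0 : IsLift p q f f0)
    -- the induced homomorphism `f_*` on deck transformation groups:
    (fstar : (XT ≃ₜ XT) → (YT ≃ₜ YT))
    (hfstar : ∀ l : XT ≃ₜ XT, IsDeck p l →
      IsDeck q (fstar l) ∧ ∀ x, f0 (l x) = fstar l (f0 x))
    (a : C(I, Y))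
    (H : C(X × I, Y)) (hH0 : ∀ x, H (x, 0) = f x) (hH1 : ∀ x, H (x, 1) = f x)
    (hHa : ∀ t, H (x₀, t) = a t)
    (h : YT ≃ₜ YT) (hh : IsDeck q h)
    (at' : C(I, YT)) (hat : ∀ t, q (at' t) = a t)
    (hat0 : at' 0 = f0 xt₀) (hat1 : at' 1 = h (f0 xt₀)) :
    (∀ l : XT ≃ₜ XT, IsDeck p l → ∀ y, h (fstar l y) = fstar l (h y)) ∧
      ∃ HT : C(XT × I, YT), (∀ x, HT (x, 0) = f0 x) ∧ (∀ x, HT (x, 1) = h (f0 x)) := by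
  have := hp.continuous
  let G : C(I × XT, Y) := ⟨fun w => H (p w.2, w.1), by fun_prop⟩
  let F0 : C(XT, YT) := ⟨f0, hf0.1⟩
  have hG₀ : ∀ x, G (0, x) = q (F0 x) := fun x => (hH0 (p x)).trans (hf0.2 x).symm
  set L := hq.liftHomotopy G F0 hG₀
  have hL_xt₀ : L (1, xt₀) = h (f0 xt₀) :=
    (hq.liftHomotopy_apply_eq_of_lifts hG₀ (fun t => by simp [G, hat, hxt₀, hHa]) hat0 1).trans
      hat1
  have hL₁ : ∀ x, L (1, x) = h (f0 x) := by
    refine congrFun (hq.eq_of_comp_eq (g₁ := fun x => L (1, x)) (by fun_prop)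
      (h.continuous.comp hf0.1) (funext fun x => ?_) xt₀ hL_xt₀)
    calc q (L (1, x)) = H (p x, 1) := congrFun (hq.liftHomotopy_lifts G F0 hG₀) (1, x)
      _ = q (h (f0 x)) := by rw [hH1, hh, hf0.2]
  refine ⟨fun l hl => ?_, L.comp ⟨Prod.swap, continuous_swap⟩, hq.liftHomotopy_zero G F0 hG₀, hL₁⟩
  obtain ⟨hl_deck, hl_comm⟩ := hfstar l hl
  refine IsDeck.commute_of_apply_eq hq hl_deck hh (e := f0 xt₀) ?_
  calc h (fstar l (f0 xt₀)) = L (1, l xt₀) := by rw [hL₁, hl_comm]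
    _ = fstar l (L (1, xt₀)) :=
      hq.liftHomotopy_apply_homeomorph hG₀ hl_deck (fun t x => congrArg (fun y => H (y, t)) (hl x)) hl_comm 1 xt₀
    _ = fstar l (h (f0 xt₀)) := by rw [hL_xt₀]

/-- If a loop `a` at `f x₀` represents an element of the generalized Gottlieb group
`G^f(Y, f x₀)` (witnessed by a homotopy `H` from `f` to `f` with trace `a` at `x₀`), and `h`
is the deck transformation of `q` sending `f0 x̃₀` to the endpoint of the lift of `a`
starting at `f0 x̃₀`, then `h` commutes with every `f_*(l)` and there is a homotopy `HT`
with `HT_0 = f0` and `HT_1 = h ∘ f0`. -/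
theorem stmt_11 {X Y XT YT : Type*} [TopologicalSpace X] [TopologicalSpace Y]
    [TopologicalSpace XT] [TopologicalSpace YT]
    [PathConnectedSpace X] [PathConnectedSpace Y]
    [LocallyPathConnectedSpace X] [LocallyPathConnectedSpace Y]
    [SimplyConnectedSpace XT] [SimplyConnectedSpace YT]
    [LocallyPathConnectedSpace XT] [LocallyPathConnectedSpace YT]
    (p : XT → X) (q : YT → Y) (hp : IsCoveringMap p) (hq : IsCoveringMap q)
    (f : X → Y) (hf : Continuous f)
    (x₀ : X) (xt₀ : XT) (hxt₀ : p xt₀ = x₀)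
    (f0 : XT → YT) (hf0 : IsLift p q f f0)
    -- the induced homomorphism `f_*` on deck transformation groups:
    (fstar : (XT ≃ₜ XT) → (YT ≃ₜ YT))
    (hfstar : ∀ l : XT ≃ₜ XT, IsDeck p l →
      IsDeck q (fstar l) ∧ ∀ x, f0 (l x) = fstar l (f0 x))
    (a : C(I, Y)) (ha0 : a 0 = f x₀) (ha1 : a 1 = f x₀)
    (H : C(X × I, Y)) (hH0 : ∀ x, H (x, 0) = f x) (hH1 : ∀ x, H (x, 1) = f x)
    (hHa : ∀ t, H (x₀, t) = a t)
    (h : YT ≃ₜ YT) (hh : IsDeck q h)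
    (at' : C(I, YT)) (hat : ∀ t, q (at' t) = a t)
    (hat0 : at' 0 = f0 xt₀) (hat1 : at' 1 = h (f0 xt₀)) :
    (∀ l : XT ≃ₜ XT, IsDeck p l → ∀ y, h (fstar l y) = fstar l (h y)) ∧
      ∃ HT : C(XT × I, YT), (∀ x, HT (x, 0) = f0 x) ∧ (∀ x, HT (x, 1) = h (f0 x)) :=
  stmt_11_general p q hp hq f x₀ xt₀ hxt₀ f0 hf0 fstar hfstar a H hH0 hH1 hHa h hh at' hat hat0 hat1
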